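/- Let k be an even integer with k ≥ 4, let d = (3k+4)/2, and let C be a symmetric (d,k) circuit code of length 4k+6 whose transition sequence has the form T(C) = (ω₁, x, ω₂, ω₁, x, ω₂), where ω₁ = (1,2,...,k+2) is a bit run and ω₂ = (β₁,...,β_k). Then every coordinate in {1,...,d} appears at least once, and at most twice, in the half-sequence (ω₁, x, ω₂). -/

import Mathlib

/-- The graph of the `d`-dimensional hypercube: vertices are binary vectors of
length `d`, adjacent iff they differ in exactly one coordinate. -/
def hypercube (d : ℕ) : SimpleGraph (Fin d → Bool) where
  Adj x y := hammingDist x y = 1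
  symm := by
    constructor
    intro x y h
    exact (hammingDist_comm y x).trans h
  loopless := by
    constructor
    intro x h
    simp [hammingDist_self] at h

/-- Distance along a cycle of length `N` between positions `i` and `j`. -/
def cycDist {N : ℕ} (i j : ZMod N) : ℕ := min (i - j).val (j - i).val

/-- `x : ZMod N → (Fin d → Bool)` is a `(d,k)` circuit code of length `N`:
a cycle in the hypercube `I(d)` satisfying the spread-`k` distance requirement. -/
structure IsCircuitCode (d k N : ℕ) (x : ZMod N → Fin d → Bool) : Prop where
  inj : Function.Injective x
  adj : ∀ i : ZMod N, (hypercube d).Adj (x i) (x (i + 1))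
  spread : ∀ i j : ZMod N, min (cycDist i j) k ≤ (hypercube d).dist (x i) (x j)

/-- `τ` is the transition sequence of the cycle `x`: `τ i` is the unique
coordinate in which `x i` and `x (i+1)` differ. -/
def IsTransitionSeq {d N : ℕ} (x : ZMod N → Fin d → Bool) (τ : ZMod N → Fin d) : Prop :=
  ∀ (i : ZMod N) (j : Fin d), x (i + 1) j ≠ x i j ↔ j = τ i

/-- The segment of `τ` of length `m` starting at position `start` is a bit run:
all of its entries are distinct. -/
def IsBitRun {d N : ℕ} (τ : ZMod N → Fin d) (start : ZMod N) (m : ℕ) : Prop :=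
  ∀ a b : Fin m, τ (start + ((a : ℕ) : ZMod N)) = τ (start + ((b : ℕ) : ZMod N)) → a = b

/-- `δ(ω)`: the number of coordinates appearing an odd number of times in the
segment of `τ` of length `m` starting at `start`. -/
def segDelta {d N : ℕ} (τ : ZMod N → Fin d) (start : ZMod N) (m : ℕ) : ℕ :=
  (Finset.univ.filter fun c : Fin d =>
    Odd (Finset.univ.filter fun t : Fin m => τ (start + ((t : ℕ) : ZMod N)) = c).card).card

/-!
The spread condition at distance `k`, together with the fact that `x i` and `x (i + m)` differ
exactly in the coordinates occurring an odd number of times among the `m` transitions between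
them, makes every window of `k` consecutive transitions a bit run. So two occurrences of a
coordinate are at least `k` apart, also across the period `2k + 3` of the symmetric sequence;
three occurrences in one half would need `2k + 3 ≥ 3k`. Applying the spread condition to
antipodal vertices, at least `k` coordinates occur an odd number of times, hence exactly once,
in the half. Since the `d = (3k + 4)/2` counts, each at most `2`, sum to `2k + 3`, none can
vanish: otherwise the sum would be at most `k + 2 (d - k - 1) = 2k + 2`.
-/

open Finset

section Hypercube

variable {d : ℕ}

lemma hypercube_adj_update {u : Fin d → Bool} {j : Fin d} {b : Bool} (h : u j ≠ b) :
    (hypercube d).Adj u (Function.update u j b) := by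
  show #{i | u i ≠ Function.update u j b i} = 1
  rw [card_eq_one]
  refine ⟨j, ext fun i => ?_⟩
  by_cases hi : i = j
  · subst hi; simpa using h
  · simp [hi]

lemma hammingDist_update_add_one {u v : Fin d → Bool} {j : Fin d} (h : u j ≠ v j) :
    hammingDist (Function.update u j (v j)) v + 1 = hammingDist u v := by
  have hfilter : ({i | Function.update u j (v j) i ≠ v i} : Finset (Fin d))
      = ({i | u i ≠ v i} : Finset (Fin d)).erase j := by
    ext i
    by_cases hi : i = j
    · subst hi; simp
    · simp [hi]
  rw [hammingDist, hfilter, card_erase_add_one (by simpa using h), hammingDist]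

lemma exists_walk_length_eq_hammingDist (u v : Fin d → Bool) :
    ∃ w : (hypercube d).Walk u v, w.length = hammingDist u v := by
  induction h : hammingDist u v generalizing u with
  | zero =>
    obtain rfl := eq_of_hammingDist_eq_zero h
    exact ⟨.nil, rfl⟩
  | succ n ih =>
    obtain ⟨j, hj⟩ : ∃ j, u j ≠ v j :=
      Function.ne_iff.mp fun huv => by simp [huv] at h
    obtain ⟨w, hw⟩ := ih (Function.update u j (v j)) (by
      have := hammingDist_update_add_one hj
      omega)
    exact ⟨.cons (hypercube_adj_update hj) w, by simp [hw]⟩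

lemma hypercube_dist_le_hammingDist (u v : Fin d → Bool) :
    (hypercube d).dist u v ≤ hammingDist u v := by
  obtain ⟨w, hw⟩ := exists_walk_length_eq_hammingDist u v
  exact hw ▸ SimpleGraph.dist_le w

end Hypercube

section TransitionSeq

variable {d N : ℕ} {x : ZMod N → Fin d → Bool} {τ : ZMod N → Fin d}

lemma card_filter_fin_succ (τ : ZMod N → Fin d) (i : ZMod N) (m : ℕ) (j : Fin d) :
    #{t : Fin (m + 1) | τ (i + ((t : ℕ) : ZMod N)) = j}
      = #{t : Fin m | τ (i + ((t : ℕ) : ZMod N)) = j} + if τ (i + m) = j then 1 else 0 := by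
  simp only [card_filter, Fin.sum_univ_castSucc, Fin.val_castSucc, Fin.val_last]

lemma IsTransitionSeq.ne_iff_odd (hτ : IsTransitionSeq x τ) (i : ZMod N) (m : ℕ) (j : Fin d) :
    x (i + m) j ≠ x i j ↔ Odd #{t : Fin m | τ (i + ((t : ℕ) : ZMod N)) = j} := by
  induction m with
  | zero => simp
  | succ m ih =>
    have hstep := hτ (i + m) j
    rw [Nat.cast_succ, ← add_assoc, card_filter_fin_succ]
    by_cases hj : τ (i + m) = j
    · rw [if_pos hj, Nat.odd_add_one, ← ih]
      have := hstep.2 hj.symm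
      revert this
      cases x (i + m + 1) j <;> cases x (i + m) j <;> cases x i j <;> simp
    · rw [if_neg hj, add_zero, ← ih, not_not.mp (mt hstep.1 (Ne.symm hj))]

lemma IsTransitionSeq.hammingDist_eq_segDelta (hτ : IsTransitionSeq x τ) (i : ZMod N) (m : ℕ) :
    hammingDist (x i) (x (i + m)) = segDelta τ i m := by
  unfold hammingDist segDelta
  simp only [ne_comm (a := x i _), hτ.ne_iff_odd]

lemma segDelta_le_card_image (τ : ZMod N → Fin d) (i : ZMod N) (m : ℕ) :
    segDelta τ i m ≤ #(univ.image fun t : Fin m => τ (i + ((t : ℕ) : ZMod N))) := by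
  refine card_le_card fun c hc => ?_
  obtain ⟨t, ht⟩ := card_pos.mp (mem_filter.mp hc).2.pos
  exact mem_image.mpr ⟨t, mem_univ t, (mem_filter.mp ht).2⟩

end TransitionSeq

lemma cycDist_self_add_natCast {N m : ℕ} (i : ZMod N) (hm : m < N) :
    cycDist i (i + m) = min m (N - m) := by
  have : NeZero N := ⟨by omega⟩
  rw [cycDist, sub_add_cancel_left, add_sub_cancel_left, ZMod.neg_val, ZMod.val_cast_of_lt hm]
  split_ifs with h
  · rw [← ZMod.val_eq_zero, ZMod.val_cast_of_lt hm] at h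
    simp [h]
  · exact min_comm _ _

namespace IsCircuitCode

variable {d k N : ℕ} {x : ZMod N → Fin d → Bool} {τ : ZMod N → Fin d}

lemma min_cycDist_le_segDelta (hx : IsCircuitCode d k N x) (hτ : IsTransitionSeq x τ)
    (i : ZMod N) (m : ℕ) : min (cycDist i (i + m)) k ≤ segDelta τ i m :=
  (hx.spread _ _).trans <|
    (hypercube_dist_le_hammingDist _ _).trans (hτ.hammingDist_eq_segDelta i m).le

lemma isBitRun (hx : IsCircuitCode d k N x) (hτ : IsTransitionSeq x τ) (hkN : 2 * k ≤ N)
    (i : ZMod N) : IsBitRun τ i k := by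
  rcases Nat.eq_zero_or_pos k with rfl | hk
  · exact fun a => a.elim0
  have hδ : k ≤ segDelta τ i k := by
    simpa [cycDist_self_add_natCast i (show k < N by omega), show k ≤ N - k by omega]
      using hx.min_cycDist_le_segDelta hτ i k
  have himage : #(univ.image fun t : Fin k => τ (i + ((t : ℕ) : ZMod N)))
      = #(univ : Finset (Fin k)) :=
    le_antisymm card_image_le (by simpa using hδ.trans (segDelta_le_card_image τ i k))
  exact fun a b h => card_image_iff.mp himage (mem_univ a) (mem_univ b) h

lemma add_le_of_transition_eq (hx : IsCircuitCode d k N x) (hτ : IsTransitionSeq x τ)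
    (hkN : 2 * k ≤ N) {a b : ℕ} (hab : a < b) (h : τ a = τ b) : a + k ≤ b := by
  by_contra hlt
  have := hx.isBitRun hτ hkN a ⟨0, by omega⟩ ⟨b - a, by omega⟩
    (by simpa [Nat.cast_sub hab.le] using h)
  simp only [Fin.ext_iff] at this
  omega

end IsCircuitCode

lemma card_filter_le_two {α : Type*} [DecidableEq α] {f : ℕ → α} {k n : ℕ}
    (hper : ∀ t, f (t + n) = f t) (hsep : ∀ a b, a < b → f a = f b → a + k ≤ b)
    (hn : n < 3 * k) (c : α) : #{t : Fin n | f t = c} ≤ 2 := by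
  have hpair : ∀ a b : Fin n, f a = c → f b = c → a ≠ b →
      (a + k ≤ (b : ℕ) ∧ b + k ≤ a + n) ∨ (b + k ≤ (a : ℕ) ∧ a + k ≤ b + n) := by
    intro a b ha hb hab
    rcases lt_or_gt_of_ne (Fin.val_ne_of_ne hab) with h | h
    · exact .inl ⟨hsep a b h (ha.trans hb.symm),
        hsep b (a + n) (by omega) (by rw [hper, hb, ha])⟩
    · exact .inr ⟨hsep b a h (hb.trans ha.symm),
        hsep a (b + n) (by omega) (by rw [hper, hb, ha])⟩
  by_contra! h3
  obtain ⟨a, ha, b, hb, e, he, hab, hae, hbe⟩ := two_lt_card.mp h3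
  simp only [mem_filter, mem_univ, true_and] at ha hb he
  have := hpair a b ha hb hab
  have := hpair a e ha he hae
  have := hpair b e hb he hbe
  omega

lemma pos_of_le_two_of_le_card_odd {ι : Type*} [Fintype ι] [DecidableEq ι] {f : ι → ℕ} {k : ℕ}
    (hle : ∀ i, f i ≤ 2) (hodd : k ≤ #{i | Odd (f i)})
    (hsum : 2 * Fintype.card ι < ∑ i, f i + k + 2) (i : ι) : 0 < f i := by
  by_contra! h0
  have hpt : ∀ j, f j + (if Odd (f j) then 1 else 0) ≤ 2 := fun j => by
    rcases (by have := hle j; omega : f j = 0 ∨ f j = 1 ∨ f j = 2) with h | h | h <;> simp [h]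
  have hi : f i + (if Odd (f i) then 1 else 0) = 0 := by simp [Nat.le_zero.mp h0]
  have : ∑ j, f j + k ≤ 2 * (Fintype.card ι - 1) :=
    calc ∑ j, f j + k
      _ ≤ ∑ j, (f j + if Odd (f j) then 1 else 0) := by
        rw [sum_add_distrib, ← card_filter]; omega
      _ = ∑ j ∈ univ.erase i, (f j + if Odd (f j) then 1 else 0) := by
        rw [← add_sum_erase _ _ (mem_univ i), hi, zero_add]
      _ ≤ #(univ.erase i) * 2 := sum_le_card_nsmul _ _ _ fun j _ => hpt j
      _ = 2 * (Fintype.card ι - 1) := by rw [card_erase_of_mem (mem_univ i), card_univ, mul_comm]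
  have : 0 < Fintype.card ι := Fintype.card_pos_iff.mpr ⟨i⟩
  omega

theorem stmt_12_general (k d : ℕ) (hk4 : 4 ≤ k) (hd : 2 * d = 3 * k + 4)
    (x : ZMod (4 * k + 6) → Fin d → Bool)
    (hx : IsCircuitCode d k (4 * k + 6) x)
    (τ : ZMod (4 * k + 6) → Fin d) (hτ : IsTransitionSeq x τ)
    (hsym : ∀ i : ZMod (4 * k + 6), τ (i + ((2 * k + 3 : ℕ) : ZMod (4 * k + 6))) = τ i) :
    ∀ c : Fin d,
      1 ≤ (Finset.univ.filter
            fun t : Fin (2 * k + 3) => τ (((t : ℕ) : ZMod (4 * k + 6))) = c).card ∧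
      (Finset.univ.filter
            fun t : Fin (2 * k + 3) => τ (((t : ℕ) : ZMod (4 * k + 6))) = c).card ≤ 2 := by
  set count := fun c : Fin d => #{t : Fin (2 * k + 3) | τ ((t : ℕ) : ZMod (4 * k + 6)) = c}
  have hle : ∀ c, count c ≤ 2 :=
    card_filter_le_two (f := fun t : ℕ => τ t) (fun t => by simpa using hsym t)
      (fun _ _ => hx.add_le_of_transition_eq hτ (by omega)) (by omega)
  have hodd : k ≤ #{c | Odd (count c)} := by
    have := hx.min_cycDist_le_segDelta hτ 0 (2 * k + 3)
    rw [cycDist_self_add_natCast 0 (by omega),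
      show min (min (2 * k + 3) (4 * k + 6 - (2 * k + 3))) k = k by omega] at this
    simpa [segDelta] using this
  have htotal : ∑ c, count c = 2 * k + 3 := by
    simpa using sum_card_fiberwise_eq_card_filter univ univ fun t : Fin (2 * k + 3) =>
      τ ((t : ℕ) : ZMod (4 * k + 6))
  exact fun c =>
    ⟨pos_of_le_two_of_le_card_odd hle hodd (by rw [Fintype.card_fin, htotal]; omega) c, hle c⟩

/-- For even `k ≥ 4`, `d = (3k+4)/2`, and a symmetric `(d,k)` circuit code of length
`4k+6` whose transition sequence has the form `(ω₁, x, ω₂, ω₁, x, ω₂)` with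
`ω₁ = (1,...,k+2)` (coordinates modeled 0-based as `Fin d`, so `ω₁` consists of the
coordinates of values `0,...,k+1`), every coordinate appears at least once and at
most twice in the half-sequence `(ω₁, x, ω₂)` (positions `0,...,2k+2`). -/
theorem stmt_12 (k d : ℕ) (hk : Even k) (hk4 : 4 ≤ k) (hd : 2 * d = 3 * k + 4)
    (x : ZMod (4 * k + 6) → Fin d → Bool)
    (hx : IsCircuitCode d k (4 * k + 6) x)
    (τ : ZMod (4 * k + 6) → Fin d) (hτ : IsTransitionSeq x τ)
    (hsym : ∀ i : ZMod (4 * k + 6), τ (i + ((2 * k + 3 : ℕ) : ZMod (4 * k + 6))) = τ i)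
    (hω₁ : ∀ i : ℕ, i ≤ k + 1 → (τ ((i : ℕ) : ZMod (4 * k + 6))).val = i) :
    ∀ c : Fin d,
      1 ≤ (Finset.univ.filter
            fun t : Fin (2 * k + 3) => τ (((t : ℕ) : ZMod (4 * k + 6))) = c).card ∧
      (Finset.univ.filter
            fun t : Fin (2 * k + 3) => τ (((t : ℕ) : ZMod (4 * k + 6))) = c).card ≤ 2 :=
  stmt_12_general k d hk4 hd x hx τ hτ hsym
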